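/- arXiv:1312.7515 — 3 statements merged into one kernel-verified Lean document; each statement's English description precedes it below -/
import Mathlib

section
/- Let T = conv(w_0,…,w_n) ⊆ [0,1]^n be an n-simplex whose vertices w_0,…,w_n are affinely independent points with rational coordinates. For each i = 0,…,n let l_i : ℝ^n → ℝ be the unique affine map satisfying l_i(w_i) = 1/den(w_i) and l_i(w_j) = 0 for all j ≠ i. Then T is regular if and only if every l_i has integer coefficients. -/
namespace MVPaper

/-- The unit `n`-cube `[0,1]^n` as a subset of `ℝ^n`. -/
def Cube (n : ℕ) : Set (Fin n → ℝ) := {x | ∀ i, 0 ≤ x i ∧ x i ≤ 1}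

/-- An affine function `ℝ^n → ℝ` with integer coefficients. -/
def IsIntAffine {n : ℕ} (l : (Fin n → ℝ) → ℝ) : Prop :=
  ∃ (b : ℤ) (m : Fin n → ℤ), ∀ x, l x = (b : ℝ) + ∑ j, (m j : ℝ) * x j

/-- An affine function `ℝ^n → ℝ` with arbitrary real coefficients. -/
def IsRealAffine {n : ℕ} (l : (Fin n → ℝ) → ℝ) : Prop :=
  ∃ (b : ℝ) (m : Fin n → ℝ), ∀ x, l x = b + ∑ j, m j * x j

/-- A McNaughton function on `[0,1]^n`: continuous, `[0,1]`-valued, and at every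
point it agrees with one of finitely many integer affine functions. -/
def IsMcNaughton {n : ℕ} (f : Cube n → ℝ) : Prop :=
  Continuous f ∧ (∀ x, 0 ≤ f x ∧ f x ≤ 1) ∧
    ∃ (t : ℕ) (l : Fin t → ((Fin n → ℝ) → ℝ)),
      (∀ i, IsIntAffine (l i)) ∧ ∀ x : Cube n, ∃ i, f x = l i (x : Fin n → ℝ)

/-- `M([0,1]^n)`: the set of all McNaughton functions on the `n`-cube. -/
def McNn (n : ℕ) : Set (Cube n → ℝ) := {f | IsMcNaughton f}

/-! ### Pointwise MV-operations on `[0,1]`-valued functions -/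

def mvZero (α : Type*) : α → ℝ := fun _ => 0
def mvAdd {α : Type*} (f g : α → ℝ) : α → ℝ := fun x => min (f x + g x) 1
def mvNeg {α : Type*} (f : α → ℝ) : α → ℝ := fun x => 1 - f x

/-- A set of functions containing the constant `0` and closed under the pointwise
MV-operations `⊕` and `¬`. -/
def MVClosed {α : Type*} (A : Set (α → ℝ)) : Prop :=
  mvZero α ∈ A ∧ (∀ f ∈ A, ∀ g ∈ A, mvAdd f g ∈ A) ∧ ∀ f ∈ A, mvNeg f ∈ A

/-- The subalgebra generated by `S`: the smallest set containing `S`, containing the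
constant `0` and closed under the pointwise MV-operations. -/
def mvGen {α : Type*} (S : Set (α → ℝ)) : Set (α → ℝ) :=
  ⋂₀ {A : Set (α → ℝ) | MVClosed A ∧ S ⊆ A}

/-- A set of functions separates points. -/
def Separates {α β : Type*} (S : Set (α → β)) : Prop :=
  ∀ x y : α, x ≠ y → ∃ f ∈ S, f x ≠ f y

/-! ### Abstract MV-algebras -/

/-- Signature of an MV-algebra: a constant `0`, a binary `⊕` and a unary `¬`. -/
structure MVStr (α : Type*) where
  zero : α
  add : α → α → α
  neg : α → α

/-- The MV-algebra axioms. -/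
def MVStr.IsMV {α : Type*} (M : MVStr α) : Prop :=
  (∀ x y z, M.add (M.add x y) z = M.add x (M.add y z)) ∧
  (∀ x y, M.add x y = M.add y x) ∧
  (∀ x, M.add x M.zero = x) ∧
  (∀ x, M.neg (M.neg x) = x) ∧
  (∀ x, M.add x (M.neg M.zero) = M.neg M.zero) ∧
  ∀ x y, M.add (M.neg (M.add (M.neg x) y)) y = M.add (M.neg (M.add (M.neg y) x)) x

/-- Homomorphism of abstract MV-algebras. -/
def IsMVHom {α β : Type*} (M : MVStr α) (N : MVStr β) (φ : α → β) : Prop :=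
  φ M.zero = N.zero ∧ (∀ x y, φ (M.add x y) = N.add (φ x) (φ y)) ∧
    ∀ x, φ (M.neg x) = N.neg (φ x)

/-- Homomorphism from a set of `[0,1]`-valued functions (with the pointwise
MV-operations) into an abstract MV-algebra. -/
def IsMVHomOfSet {α γ : Type*} (B : Set (α → ℝ)) (Mc : MVStr γ) (h : B → γ) : Prop :=
  (∀ f : B, (f : α → ℝ) = mvZero α → h f = Mc.zero) ∧
  (∀ f g k : B, (k : α → ℝ) = mvAdd (f : α → ℝ) (g : α → ℝ) → h k = Mc.add (h f) (h g)) ∧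
  ∀ f g : B, (g : α → ℝ) = mvNeg (f : α → ℝ) → h g = Mc.neg (h f)

/-- Projectivity of an MV-algebra of `[0,1]`-valued functions: every homomorphism
into the quotient of a surjective homomorphism lifts. -/
def IsProjectiveMVSet {α : Type*} (A : Set (α → ℝ)) : Prop :=
  ∀ (β γ : Type*) (Mb : MVStr β) (Mc : MVStr γ), Mb.IsMV → Mc.IsMV →
    ∀ ψ : β → γ, IsMVHom Mb Mc ψ → Function.Surjective ψ →
      ∀ φ : A → γ, IsMVHomOfSet A Mc φ →
        ∃ θ : A → β, IsMVHomOfSet A Mb θ ∧ ∀ f, ψ (θ f) = φ f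

/-- `A` is an epi-subalgebra of the function MV-algebra `B`: any two MV-homomorphisms
out of `B` agreeing on `A` are equal. -/
def IsEpiSub {α : Type*} (A B : Set (α → ℝ)) : Prop :=
  A ⊆ B ∧
    ∀ (γ : Type*) (Mc : MVStr γ), Mc.IsMV →
      ∀ h g : B → γ, IsMVHomOfSet B Mc h → IsMVHomOfSet B Mc g →
        (∀ f : B, (f : α → ℝ) ∈ A → h f = g f) → h = g

/-- MV-isomorphism between two sets of `[0,1]`-valued functions, each equipped with
the pointwise MV-operations: a bijection preserving `0`, `⊕` and `¬`. -/
def MVIsoSets {α β : Type*} (A : Set (α → ℝ)) (B : Set (β → ℝ)) : Prop :=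
  ∃ φ : A → B, Function.Bijective φ ∧
    (∀ f : A, (f : α → ℝ) = mvZero α → (φ f : β → ℝ) = mvZero β) ∧
    (∀ f g k : A, (k : α → ℝ) = mvAdd (f : α → ℝ) (g : α → ℝ) →
      (φ k : β → ℝ) = mvAdd (φ f : β → ℝ) (φ g : β → ℝ)) ∧
    ∀ f g : A, (g : α → ℝ) = mvNeg (f : α → ℝ) → (φ g : β → ℝ) = mvNeg (φ f : β → ℝ)

/-! ### Rational polyhedra and `M(P)` -/

def IsRatPoint {n : ℕ} (x : Fin n → ℝ) : Prop := ∀ i, ∃ q : ℚ, x i = (q : ℝ)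

/-- A rational polyhedron in `[0,1]^n`: a finite union of convex hulls of finite
sets of rational points of the cube. -/
def IsRatPolyhedron {n : ℕ} (P : Set (Fin n → ℝ)) : Prop :=
  ∃ V : Finset (Finset (Fin n → ℝ)),
    (∀ S ∈ V, ∀ v ∈ S, v ∈ Cube n ∧ IsRatPoint v) ∧
    P = ⋃ S ∈ V, convexHull ℝ (S : Set (Fin n → ℝ))

/-- Restriction of a function on the cube to a subset `P` of the cube. -/
def restrictCube {n : ℕ} {P : Set (Fin n → ℝ)} (hP : P ⊆ Cube n) (f : Cube n → ℝ) :
    P → ℝ :=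
  fun x => f ⟨x.1, hP x.2⟩

/-- `M(P)`: restrictions to `P` of McNaughton functions on `[0,1]^n`. -/
def McNP {n : ℕ} {P : Set (Fin n → ℝ)} (hP : P ⊆ Cube n) : Set (P → ℝ) :=
  {f | ∃ g : Cube n → ℝ, IsMcNaughton g ∧ f = restrictCube hP g}

/-! ### Z-maps and Z-homeomorphisms -/

def IsIntAffineVec {n k : ℕ} (L : (Fin n → ℝ) → (Fin k → ℝ)) : Prop :=
  ∀ j, IsIntAffine fun x => L x j

/-- A Z-map between subsets of cubes: continuous and at every point agreeing with
one of finitely many integer affine maps. -/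
def IsZMap {n k : ℕ} (P : Set (Fin n → ℝ)) (Q : Set (Fin k → ℝ)) (η : P → Q) : Prop :=
  Continuous η ∧
    ∃ (t : ℕ) (L : Fin t → ((Fin n → ℝ) → (Fin k → ℝ))),
      (∀ i, IsIntAffineVec (L i)) ∧ ∀ x : P, ∃ i, (η x : Fin k → ℝ) = L i (x : Fin n → ℝ)

/-- A Z-homeomorphism of `P` onto `Q`: a bijective Z-map whose inverse is a Z-map. -/
def IsZHomeo {n k : ℕ} (P : Set (Fin n → ℝ)) (Q : Set (Fin k → ℝ)) (η : P → Q) : Prop :=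
  IsZMap P Q η ∧ Function.Bijective η ∧
    ∃ θ : Q → P, IsZMap Q P θ ∧ (∀ x, θ (η x) = x) ∧ ∀ y, η (θ y) = y

def ZHomeomorphic {n k : ℕ} (P : Set (Fin n → ℝ)) (Q : Set (Fin k → ℝ)) : Prop :=
  ∃ η : P → Q, IsZHomeo P Q η

/-- Corestriction of a map `η : P → Q` to its image (as a subset of `ℝ^k`). -/
def corestrict {n k : ℕ} {P : Set (Fin n → ℝ)} {Q : Set (Fin k → ℝ)} (η : P → Q) :
    P → ↥(Subtype.val '' Set.range η) :=
  fun x => ⟨(η x : Fin k → ℝ), ⟨η x, ⟨x, rfl⟩, rfl⟩⟩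

/-! ### Denominators, homogeneous correspondents, regular simplexes -/

/-- The denominator of a rational point: the least positive integer `d` such that
`d·x` has integer coordinates. -/
noncomputable def den {n : ℕ} (x : Fin n → ℝ) : ℕ :=
  sInf {d : ℕ | 0 < d ∧ ∀ i, ∃ c : ℤ, (d : ℝ) * x i = (c : ℝ)}

/-- The homogeneous correspondent `x̃ = (den(x)·x, den(x)) ∈ ℤ^{n+1}` of a rational
point `x`. -/
noncomputable def tilde {n : ℕ} (x : Fin n → ℝ) : Fin (n + 1) → ℤ :=
  fun i => if h : (i : ℕ) < n then ⌊(den x : ℝ) * x ⟨(i : ℕ), h⟩⌋ else (den x : ℤ)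

/-- A set of integer vectors extends to a basis of the free abelian group `ℤ^{n+1}`. -/
def ExtendsToBasis {n : ℕ} (S : Set (Fin (n + 1) → ℤ)) : Prop :=
  ∃ b : Module.Basis (Fin (n + 1)) ℤ (Fin (n + 1) → ℤ), S ⊆ Set.range b

/-! ### Rational triangulations of the cube, weights, hats -/

/-- A rational triangulation of `[0,1]^n`, presented as the finite set of the vertex
sets of its simplexes. -/
def IsTriangulation {n : ℕ} (Δ : Finset (Finset (Fin n → ℝ))) : Prop :=
  letI := Classical.decEq (Fin n → ℝ)
  (∀ S ∈ Δ, S.Nonempty ∧ (∀ v ∈ S, v ∈ Cube n ∧ IsRatPoint v) ∧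
      AffineIndependent ℝ (fun v : (S : Set (Fin n → ℝ)) => (v : Fin n → ℝ))) ∧
  (⋃ S ∈ Δ, convexHull ℝ (S : Set (Fin n → ℝ))) = Cube n ∧
  (∀ S ∈ Δ, ∀ S' : Finset (Fin n → ℝ), S' ⊆ S → S'.Nonempty → S' ∈ Δ) ∧
  ∀ S ∈ Δ, ∀ T ∈ Δ,
    convexHull ℝ (S : Set (Fin n → ℝ)) ∩ convexHull ℝ (T : Set (Fin n → ℝ)) =
      convexHull ℝ ((S ∩ T : Finset (Fin n → ℝ)) : Set (Fin n → ℝ))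

/-- The vertex set of a triangulation. -/
noncomputable def vertexSet {n : ℕ} (Δ : Finset (Finset (Fin n → ℝ))) :
    Finset (Fin n → ℝ) :=
  letI := Classical.decEq (Fin n → ℝ)
  Δ.sup id

/-- A regular (unimodular) triangulation: all simplexes are regular. -/
def IsRegularTriangulation {n : ℕ} (Δ : Finset (Finset (Fin n → ℝ))) : Prop :=
  IsTriangulation Δ ∧ ∀ S ∈ Δ, ExtendsToBasis (tilde '' (S : Set (Fin n → ℝ)))

/-- A weighted triangulation: each vertex `v` carries a positive weight dividing
`den v`. -/
def IsWeighted {n : ℕ} (Δ : Finset (Finset (Fin n → ℝ))) (a : (Fin n → ℝ) → ℕ) : Prop :=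
  IsTriangulation Δ ∧ ∀ v ∈ vertexSet Δ, 0 < a v ∧ a v ∣ den v

/-- The hat of a weighted triangulation at the vertex `v`: `[0,1]`-valued, affine on
each simplex of `Δ`, with value `a v / den v` at `v` and `0` at all other vertices. -/
def IsHat {n : ℕ} (Δ : Finset (Finset (Fin n → ℝ))) (a : (Fin n → ℝ) → ℕ)
    (v : Fin n → ℝ) (h : Cube n → ℝ) : Prop :=
  (∀ x, 0 ≤ h x ∧ h x ≤ 1) ∧
  (∀ S ∈ Δ, ∃ l : (Fin n → ℝ) → ℝ, IsRealAffine l ∧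
      ∀ x : Cube n, (x : Fin n → ℝ) ∈ convexHull ℝ (S : Set (Fin n → ℝ)) → h x = l x) ∧
  (∀ x : Cube n, (x : Fin n → ℝ) = v → h x = (a v : ℝ) / (den v : ℝ)) ∧
  ∀ x : Cube n, (x : Fin n → ℝ) ∈ vertexSet Δ → (x : Fin n → ℝ) ≠ v → h x = 0

/-- A family assigning to each vertex of `Δ` its hat. -/
def IsHatFamily {n : ℕ} (Δ : Finset (Finset (Fin n → ℝ))) (a : (Fin n → ℝ) → ℕ)
    (h : (Fin n → ℝ) → Cube n → ℝ) : Prop :=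
  ∀ v ∈ vertexSet Δ, IsHat Δ a v (h v)

/-- The set of hats `H_{Δ,a}` of a weighted triangulation. -/
def hatSet {n : ℕ} (Δ : Finset (Finset (Fin n → ℝ)))
    (h : (Fin n → ℝ) → Cube n → ℝ) : Set (Cube n → ℝ) :=
  (fun v => h v) '' (vertexSet Δ : Set (Fin n → ℝ))

/-! ### Unital ℓ-groups of functions -/

/-- A set of real-valued functions which is a subgroup closed under pointwise
`⊔`, `⊓` and containing the constant function `1`. -/
def LClosed {α : Type*} (G : Set (α → ℝ)) : Prop :=
  (fun _ => (0 : ℝ)) ∈ G ∧ (∀ f ∈ G, ∀ g ∈ G, f + g ∈ G) ∧ (∀ f ∈ G, -f ∈ G) ∧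
    (∀ f ∈ G, ∀ g ∈ G, f ⊔ g ∈ G) ∧ (∀ f ∈ G, ∀ g ∈ G, f ⊓ g ∈ G) ∧
    (fun _ => (1 : ℝ)) ∈ G

/-- The unital ℓ-subgroup generated by `S`. -/
def lGen {α : Type*} (S : Set (α → ℝ)) : Set (α → ℝ) := ⋂₀ {G | LClosed G ∧ S ⊆ G}

/-- A continuous piecewise integer affine real-valued function on the cube. -/
def IsMcNGroupFun {n : ℕ} (f : Cube n → ℝ) : Prop :=
  Continuous f ∧ ∃ (t : ℕ) (l : Fin t → ((Fin n → ℝ) → ℝ)),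
    (∀ i, IsIntAffine (l i)) ∧ ∀ x : Cube n, ∃ i, f x = l i (x : Fin n → ℝ)

/-- `McN_group([0,1]^n)`. -/
def McNGroup (n : ℕ) : Set (Cube n → ℝ) := {f | IsMcNGroupFun f}

/-- Signature of a unital ℓ-group. -/
structure ULStr (α : Type*) where
  zero : α
  add : α → α → α
  neg : α → α
  sup : α → α → α
  inf : α → α → α
  unit : α

def ULStr.nsmul {α : Type*} (M : ULStr α) : ℕ → α → α
  | 0, _ => M.zero
  | k + 1, a => M.add a (M.nsmul k a)

/-- The unital ℓ-group axioms: abelian group, lattice, translation invariance,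
`u ≥ 0`, and `u` is a strong order unit. -/
def ULStr.IsUL {α : Type*} (M : ULStr α) : Prop :=
  (∀ a b c, M.add (M.add a b) c = M.add a (M.add b c)) ∧
  (∀ a b, M.add a b = M.add b a) ∧
  (∀ a, M.add a M.zero = a) ∧
  (∀ a, M.add a (M.neg a) = M.zero) ∧
  (∀ a b, M.sup a b = M.sup b a) ∧
  (∀ a b c, M.sup (M.sup a b) c = M.sup a (M.sup b c)) ∧
  (∀ a b, M.inf a b = M.inf b a) ∧
  (∀ a b c, M.inf (M.inf a b) c = M.inf a (M.inf b c)) ∧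
  (∀ a b, M.sup a (M.inf a b) = a) ∧
  (∀ a b, M.inf a (M.sup a b) = a) ∧
  (∀ a b c, M.sup a b = b → M.sup (M.add a c) (M.add b c) = M.add b c) ∧
  M.sup M.unit M.zero = M.unit ∧
  ∀ g, ∃ m : ℕ, 0 < m ∧ M.sup g (M.nsmul m M.unit) = M.nsmul m M.unit

/-- Homomorphism of abstract unital ℓ-groups: preserves `+`, `⊔`, `⊓` and the unit. -/
def IsULHom {α β : Type*} (M : ULStr α) (N : ULStr β) (φ : α → β) : Prop :=
  (∀ a b, φ (M.add a b) = N.add (φ a) (φ b)) ∧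
  (∀ a b, φ (M.sup a b) = N.sup (φ a) (φ b)) ∧
  (∀ a b, φ (M.inf a b) = N.inf (φ a) (φ b)) ∧
  φ M.unit = N.unit

/-- Homomorphism from a set of real-valued functions (pointwise operations, constant
`1` as unit) into an abstract unital ℓ-group. -/
def IsULHomOfSet {α γ : Type*} (G : Set (α → ℝ)) (N : ULStr γ) (φ : G → γ) : Prop :=
  (∀ f g k : G, (k : α → ℝ) = (f : α → ℝ) + (g : α → ℝ) → φ k = N.add (φ f) (φ g)) ∧
  (∀ f g k : G, (k : α → ℝ) = (f : α → ℝ) ⊔ (g : α → ℝ) → φ k = N.sup (φ f) (φ g)) ∧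
  (∀ f g k : G, (k : α → ℝ) = (f : α → ℝ) ⊓ (g : α → ℝ) → φ k = N.inf (φ f) (φ g)) ∧
  ∀ f : G, (f : α → ℝ) = (fun _ => (1 : ℝ)) → φ f = N.unit

/-- Projectivity of a unital ℓ-group of functions. -/
def IsProjectiveULSet {α : Type*} (G : Set (α → ℝ)) : Prop :=
  ∀ (β γ : Type*) (Mb : ULStr β) (Mc : ULStr γ), Mb.IsUL → Mc.IsUL →
    ∀ ψ : β → γ, IsULHom Mb Mc ψ → Function.Surjective ψ →
      ∀ φ : G → γ, IsULHomOfSet G Mc φ →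
        ∃ θ : G → β, IsULHomOfSet G Mb θ ∧ ∀ f, ψ (θ f) = φ f

/-- Unital ℓ-isomorphism between two sets of real-valued functions with the pointwise
operations and the constant `1` as unit. -/
def ULIsoSets {α β : Type*} (G : Set (α → ℝ)) (H : Set (β → ℝ)) : Prop :=
  ∃ φ : G → H, Function.Bijective φ ∧
    (∀ f g k : G, (k : α → ℝ) = (f : α → ℝ) + (g : α → ℝ) →
      (φ k : β → ℝ) = (φ f : β → ℝ) + (φ g : β → ℝ)) ∧
    (∀ f g k : G, (k : α → ℝ) = (f : α → ℝ) ⊔ (g : α → ℝ) →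
      (φ k : β → ℝ) = (φ f : β → ℝ) ⊔ (φ g : β → ℝ)) ∧
    (∀ f g k : G, (k : α → ℝ) = (f : α → ℝ) ⊓ (g : α → ℝ) →
      (φ k : β → ℝ) = (φ f : β → ℝ) ⊓ (φ g : β → ℝ)) ∧
    ∀ f : G, (f : α → ℝ) = (fun _ => (1 : ℝ)) → (φ f : β → ℝ) = fun _ => (1 : ℝ)

/-! ### MV-terms, their encoding and their evaluation -/

/-- MV-terms: formal expressions built from variables and `0` by `¬` and `⊕`. -/
inductive MVTerm : Type
  | zero : MVTerm
  | var : ℕ → MVTerm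
  | neg : MVTerm → MVTerm
  | add : MVTerm → MVTerm → MVTerm

/-- A term only uses the variables `X_1, …, X_n`. -/
def MVTerm.Good (n : ℕ) : MVTerm → Prop
  | .zero => True
  | .var i => i < n
  | .neg t => t.Good n
  | .add s t => s.Good n ∧ t.Good n

/-- The McNaughton function `τ̂ : [0,1]^n → [0,1]` associated with a term `τ`. -/
noncomputable def MVTerm.eval (n : ℕ) : MVTerm → Cube n → ℝ
  | .zero => fun _ => 0
  | .var i => fun x => if h : i < n then (x : Fin n → ℝ) ⟨i, h⟩ else 0
  | .neg t => fun x => 1 - MVTerm.eval n t x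
  | .add s t => fun x => min (MVTerm.eval n s x + MVTerm.eval n t x) 1

/-- A canonical computable encoding of MV-terms as natural numbers. -/
def MVTerm.code : MVTerm → ℕ
  | .zero => 0
  | .var i => 4 * i + 1
  | .neg t => 4 * t.code + 2
  | .add s t => 4 * Nat.pair s.code t.code + 3

/-- Encoding of a finite list of MV-terms. -/
def encodeTerms (l : List MVTerm) : ℕ := Encodable.encode (l.map MVTerm.code)

/-- Encoding of an instance `(n, [τ_1, …, τ_k])`. -/
def encodeInstance (n : ℕ) (l : List MVTerm) : ℕ := Nat.pair n (encodeTerms l)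

/-- Encoding of an instance `(n, [τ_1, …, τ_k], [σ_1, …, σ_l])`. -/
def encodeInstance2 (n : ℕ) (l₁ l₂ : List MVTerm) : ℕ :=
  Nat.pair n (Nat.pair (encodeTerms l₁) (encodeTerms l₂))

/-- The set of McNaughton functions `{τ̂_1, …, τ̂_k}` of a list of terms. -/
def evalSet (n : ℕ) (l : List MVTerm) : Set (Cube n → ℝ) :=
  {f | ∃ τ ∈ l, f = MVTerm.eval n τ}

/-- The zeroset `Z_σ = σ̂⁻¹(0) ⊆ [0,1]^k` of the term `σ`. -/
def Zset (k : ℕ) (σ : MVTerm) : Set (Fin k → ℝ) :=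
  {x | ∃ h : x ∈ Cube k, MVTerm.eval k σ ⟨x, h⟩ = 0}

theorem Zset_subset_cube (k : ℕ) (σ : MVTerm) : Zset k σ ⊆ Cube k :=
  fun _ hx => hx.elim fun h _ => h

/-- `M(Z_σ)`: restrictions to the zeroset of `σ̂` of McNaughton functions. -/
def McNZ (k : ℕ) (σ : MVTerm) : Set ((Zset k σ) → ℝ) := McNP (Zset_subset_cube k σ)

/-!
Let `A` be the integer matrix whose rows are the homogeneous correspondents
`w̃_i = den(w_i) • (w_i, 1)`, and `C` the real matrix whose `i`-th column is the coefficient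
vector `(m, b)` of `l_i`, so that `l_i x = (x, 1) ⬝ᵥ (m, b)`. The conditions on the `l_i`
say exactly that `A C = 1`. In particular the rows of `A` are distinct, so they extend to a
basis of `ℤ^{n+1}` iff `det A = ±1`, that is, iff `A⁻¹ = C` has integer entries.
-/

open scoped Matrix

section Matrices

open Matrix Function

variable {ι R : Type*} [Fintype ι] [DecidableEq ι]

theorem exists_basis_range_subset_iff_isUnit_det [CommRing R] {v : ι → ι → R}
    (hv : Injective v) :
    (∃ b : Module.Basis ι R (ι → R), Set.range v ⊆ Set.range b) ↔
      IsUnit (Matrix.of v).det := by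
  rw [← Pi.basisFun_det_apply, ← Module.Basis.is_basis_iff_det]
  constructor
  · rintro ⟨b, hb⟩
    choose g hg using fun i => hb (Set.mem_range_self i)
    have hg_inj : Injective g := fun i j h => hv (by rw [← hg, ← hg, h])
    have hvb : v = b ∘ g := funext fun i => (hg i).symm
    refine ⟨hvb ▸ b.linearIndependent.comp g hg_inj, ?_⟩
    rw [hvb, Set.range_comp, (Finite.injective_iff_surjective.1 hg_inj).range_eq,
      Set.image_univ, b.span_eq]
  · rintro ⟨hli, hspan⟩
    exact ⟨Module.Basis.mk hli hspan.ge, by rw [Module.Basis.coe_mk]⟩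

theorem Matrix.injective_of_mul_eq_one [Semiring R] [Nontrivial R] {A B : Matrix ι ι R}
    (h : A * B = 1) : Injective A := by
  intro i j hij
  have hrow : (1 : Matrix ι ι R) i = (1 : Matrix ι ι R) j := by
    rw [← h]
    ext k
    simp only [mul_apply, hij]
  by_contra hne
  simpa [one_apply_ne (Ne.symm hne)] using congr_fun hrow i

theorem Matrix.injective_of_map_mul_eq_one [Ring R] [Nontrivial R] {A : Matrix ι ι ℤ}
    {C : Matrix ι ι R} (h : A.map (Int.cast : ℤ → R) * C = 1) : Injective A :=
  fun i j hij => injective_of_mul_eq_one h (by ext k; simp [hij])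

theorem Matrix.isUnit_det_iff_exists_map_eq [CommRing R] [CharZero R] {A : Matrix ι ι ℤ}
    {C : Matrix ι ι R} (hAC : A.map (Int.cast : ℤ → R) * C = 1) :
    IsUnit A.det ↔ ∃ D : Matrix ι ι ℤ, D.map (Int.cast : ℤ → R) = C := by
  have hmap : ∀ M N : Matrix ι ι ℤ,
      (M * N).map (Int.cast : ℤ → R) = M.map Int.cast * N.map Int.cast :=
    fun M N => Matrix.map_mul (f := Int.castRingHom R)
  have hone : (1 : Matrix ι ι ℤ).map (Int.cast : ℤ → R) = 1 :=
    Matrix.map_one _ Int.cast_zero Int.cast_one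
  constructor
  · intro hA
    refine ⟨A⁻¹, ?_⟩
    rw [← inv_eq_right_inv hAC]
    exact (inv_eq_right_inv (by rw [← hmap, mul_nonsing_inv A hA, hone])).symm
  · rintro ⟨D, rfl⟩
    refine isUnit_det_of_right_inverse (B := D) (map_injective (Int.cast_injective (α := R)) ?_)
    dsimp only
    rw [hmap, hAC, hone]

end Matrices

section Homogeneous

variable {n : ℕ}

theorem isRealAffine_iff {l : (Fin n → ℝ) → ℝ} :
    IsRealAffine l ↔ ∃ c : Fin (n + 1) → ℝ, ∀ x, l x = Fin.snoc x 1 ⬝ᵥ c := by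
  constructor
  · rintro ⟨b, m, hl⟩
    refine ⟨Fin.snoc m b, fun x => ?_⟩
    simp [hl, dotProduct, Fin.sum_univ_castSucc, mul_comm, add_comm]
  · rintro ⟨c, hl⟩
    refine ⟨c (Fin.last n), Fin.init c, fun x => ?_⟩
    simp [hl, dotProduct, Fin.sum_univ_castSucc, Fin.init, mul_comm, add_comm]

theorem isIntAffine_iff {l : (Fin n → ℝ) → ℝ} :
    IsIntAffine l ↔ ∃ d : Fin (n + 1) → ℤ, ∀ x, l x = Fin.snoc x 1 ⬝ᵥ fun k => (d k : ℝ) := by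
  constructor
  · rintro ⟨b, m, hl⟩
    refine ⟨Fin.snoc m b, fun x => ?_⟩
    simp [hl, dotProduct, Fin.sum_univ_castSucc, mul_comm, add_comm]
  · rintro ⟨d, hl⟩
    refine ⟨d (Fin.last n), Fin.init d, fun x => ?_⟩
    simp [hl, dotProduct, Fin.sum_univ_castSucc, Fin.init, mul_comm, add_comm]

theorem den_spec {x : Fin n → ℝ} (hx : IsRatPoint x) :
    0 < den x ∧ ∀ i, ∃ c : ℤ, (den x : ℝ) * x i = c := by
  choose q hq using hx
  refine Nat.sInf_mem (s := {d | 0 < d ∧ ∀ i, ∃ c : ℤ, (d : ℝ) * x i = c})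
    ⟨∏ j, (q j).den, Finset.prod_pos fun j _ => (q j).pos, fun i => ?_⟩
  obtain ⟨k, hk⟩ := Finset.dvd_prod_of_mem (fun j => (q j).den) (Finset.mem_univ i)
  have hnum : (q i : ℝ) * (q i).den = (q i).num := by exact_mod_cast Rat.mul_den_eq_num (q i)
  refine ⟨(q i).num * k, ?_⟩
  rw [hk, hq i]
  push_cast
  rw [← hnum]
  ring

theorem cast_tilde_eq_smul_snoc {x : Fin n → ℝ} (hx : IsRatPoint x) :
    (fun k => (tilde x k : ℝ)) = (den x : ℝ) • Fin.snoc x 1 := by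
  funext k
  refine Fin.lastCases ?_ (fun j => ?_) k
  · simp [tilde]
  · obtain ⟨c, hc⟩ := (den_spec hx).2 j
    simp [tilde, hc]

theorem map_tilde_mul_coeffs_eq_one {w : Fin (n + 1) → Fin n → ℝ}
    (hrat : ∀ i, IsRatPoint (w i)) {l : Fin (n + 1) → (Fin n → ℝ) → ℝ}
    (hval : ∀ i, l i (w i) = 1 / (den (w i) : ℝ)) (hzero : ∀ i j, j ≠ i → l i (w j) = 0)
    {c : Fin (n + 1) → Fin (n + 1) → ℝ} (hc : ∀ i x, l i x = Fin.snoc x 1 ⬝ᵥ c i) :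
    (Matrix.of fun i => tilde (w i)).map (Int.cast : ℤ → ℝ) * (Matrix.of c)ᵀ = 1 := by
  ext j i
  change (fun k => (tilde (w j) k : ℝ)) ⬝ᵥ c i = (1 : Matrix _ _ ℝ) j i
  rw [cast_tilde_eq_smul_snoc (hrat j), smul_dotProduct, ← hc, smul_eq_mul, Matrix.one_apply]
  split_ifs with h
  · subst h
    have hden := (den_spec (hrat j)).1
    rw [hval]
    field_simp
  · rw [hzero i j h, mul_zero]

end Homogeneous

theorem regular_simplex_iff_int_coeffs_general (n : ℕ) (w : Fin (n + 1) → Fin n → ℝ)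
    (hrat : ∀ i, IsRatPoint (w i))
    (l : Fin (n + 1) → (Fin n → ℝ) → ℝ)
    (haff : ∀ i, IsRealAffine (l i))
    (hval : ∀ i, l i (w i) = 1 / (den (w i) : ℝ))
    (hzero : ∀ i j, j ≠ i → l i (w j) = 0) :
    ExtendsToBasis (Set.range fun i => tilde (w i)) ↔ ∀ i, IsIntAffine (l i) := by
  choose c hc using fun i => isRealAffine_iff.1 (haff i)
  have hAC := map_tilde_mul_coeffs_eq_one hrat hval hzero hc
  rw [ExtendsToBasis, exists_basis_range_subset_iff_isUnit_det (v := fun i => tilde (w i))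
    (Matrix.injective_of_map_mul_eq_one hAC), Matrix.isUnit_det_iff_exists_map_eq hAC]
  simp_rw [isIntAffine_iff]
  constructor
  · rintro ⟨D, hD⟩ i
    refine ⟨fun k => D k i, fun x => ?_⟩
    rw [hc, show c i = fun k => (D k i : ℝ) from funext fun k => (congr_fun₂ hD k i).symm]
  · intro hint
    choose d hd using hint
    refine ⟨(Matrix.of d)ᵀ, ?_⟩
    rw [← Matrix.inv_eq_right_inv hAC]
    exact (Matrix.inv_eq_right_inv (map_tilde_mul_coeffs_eq_one hrat hval hzero hd)).symm

/-- An `n`-simplex `T = conv(w_0, …, w_n) ⊆ [0,1]^n` with rational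
vertices is regular iff all the affine functions `l_i` (with `l_i(w_i) = 1/den(w_i)`
and `l_i(w_j) = 0` for `j ≠ i`) have integer coefficients. -/
theorem regular_simplex_iff_int_coeffs (n : ℕ) (w : Fin (n + 1) → Fin n → ℝ)
    (hind : AffineIndependent ℝ w) (hrat : ∀ i, IsRatPoint (w i))
    (hcube : ∀ i, w i ∈ Cube n)
    (l : Fin (n + 1) → (Fin n → ℝ) → ℝ)
    (haff : ∀ i, IsRealAffine (l i))
    (hval : ∀ i, l i (w i) = 1 / (den (w i) : ℝ))
    (hzero : ∀ i j, j ≠ i → l i (w j) = 0) :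
    ExtendsToBasis (Set.range fun i => tilde (w i)) ↔ ∀ i, IsIntAffine (l i) :=
  regular_simplex_iff_int_coeffs_general n w hrat l haff hval hzero

end MVPaper
end

section
/- Let Δ be a regular triangulation of [0,1]^n with vertices v_1,…,v_u, and for each i let a_i ≥ 1 be an integer dividing den(v_i). Then (Δ,(a_1,…,a_u)) is a weighted triangulation of [0,1]^n whose set of hats H_{Δ,a} is basic, i.e., every hat h_i of (Δ,(a_1,…,a_u)) is a McNaughton function on [0,1]^n. -/
namespace MVPaper

/-!
On a regular simplex `S` the vectors `w̃` (`w` a vertex of `S`) are part of a basis of `ℤ^{n+1}`.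
Multiplying by `a_v` the coordinate functional dual to `ṽ` gives an integer linear form taking
the value `a_v` at `ṽ` and `0` at the other `w̃`; since its dehomogenization `l` satisfies
`den(w) · l(w) = form(w̃)`, `l` is an integer affine function equal to `a_v / den(v)` at `v` and
to `0` at the other vertices of `S`. These pieces agree at common vertices, hence on common faces,
so they glue to a continuous function on the cube, which is the hat at `v`: it is piecewise
integer affine, and `[0,1]`-valued because `a_v ≤ den(v)`.
-/

section RationalPoints

variable {n : ℕ} {x y : Fin n → ℝ}

theorem IsRatPoint.den_mem (hx : IsRatPoint x) :
    den x ∈ {d : ℕ | 0 < d ∧ ∀ i, ∃ c : ℤ, (d : ℝ) * x i = (c : ℝ)} := by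
  choose q hq using hx
  refine Nat.sInf_mem ⟨∏ i, (q i).den, Finset.prod_pos fun i _ => (q i).pos, fun i => ?_⟩
  refine ⟨(∏ j ∈ Finset.univ.erase i, ((q j).den : ℤ)) * (q i).num, ?_⟩
  rw [hq i, ← Finset.prod_erase_mul _ _ (Finset.mem_univ i)]
  push_cast
  rw [mul_assoc, mul_comm ((q i).den : ℝ), ← Rat.cast_natCast, ← Rat.cast_mul, Rat.mul_den_eq_num,
    Rat.cast_intCast]

theorem IsRatPoint.den_pos (hx : IsRatPoint x) : 0 < den x := hx.den_mem.1

theorem IsRatPoint.tilde_castSucc (hx : IsRatPoint x) (i : Fin n) :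
    ((tilde x i.castSucc : ℤ) : ℝ) = (den x : ℝ) * x i := by
  obtain ⟨c, hc⟩ := hx.den_mem.2 i
  simp [tilde, hc]

theorem tilde_last (x : Fin n → ℝ) : tilde x (Fin.last n) = (den x : ℤ) := by
  simp [tilde]

theorem IsRatPoint.eq_of_tilde_eq (hx : IsRatPoint x) (hy : IsRatPoint y)
    (h : tilde x = tilde y) : x = y := by
  have hden : (den x : ℝ) = den y := by exact_mod_cast tilde_last x ▸ tilde_last y ▸ congrFun h _
  funext i
  have hi := congrArg (fun z : ℤ => (z : ℝ)) (congrFun h i.castSucc)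
  simp only [hx.tilde_castSucc, hy.tilde_castSucc, hden] at hi
  exact mul_left_cancel₀ (by exact_mod_cast hy.den_pos.ne') hi

end RationalPoints

section Dehomogenize

variable {n : ℕ}

/-- The affine function on `ℝ^n` whose homogenization is `g`, the last coordinate of `ℤ^{n+1}`
being the homogenizing one. -/
def dehomogenize (g : (Fin (n + 1) → ℤ) →ₗ[ℤ] ℤ) (x : Fin n → ℝ) : ℝ :=
  (g (Pi.single (Fin.last n) 1) : ℝ) + ∑ j, (g (Pi.single j.castSucc 1) : ℝ) * x j

theorem isIntAffine_dehomogenize (g : (Fin (n + 1) → ℤ) →ₗ[ℤ] ℤ) :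
    IsIntAffine (dehomogenize g) :=
  ⟨_, _, fun _ => rfl⟩

theorem IsRatPoint.den_mul_dehomogenize (g : (Fin (n + 1) → ℤ) →ₗ[ℤ] ℤ) {x : Fin n → ℝ}
    (hx : IsRatPoint x) : (den x : ℝ) * dehomogenize g x = g (tilde x) := by
  conv_rhs => rw [pi_eq_sum_univ' (tilde x), map_sum]
  simp only [map_smul, smul_eq_mul, Fin.sum_univ_castSucc, tilde_last]
  push_cast
  simp only [dehomogenize, hx.tilde_castSucc, mul_add, Finset.mul_sum]
  rw [add_comm, mul_comm]
  exact congrArg (· + _) (Finset.sum_congr rfl fun _ _ => by ring)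

/-- Take `k` times the coordinate functional dual to `ṽ` in a basis containing all `w̃`, and
dehomogenize it. -/
theorem exists_isIntAffine_eq_ite_of_extendsToBasis {S : Finset (Fin n → ℝ)}
    (hrat : ∀ w ∈ S, IsRatPoint w) (hbas : ExtendsToBasis (tilde '' (S : Set (Fin n → ℝ))))
    (v : Fin n → ℝ) (k : ℤ) :
    ∃ l : (Fin n → ℝ) → ℝ, IsIntAffine l ∧
      ∀ w ∈ S, l w = if w = v then (k : ℝ) / den v else 0 := by
  by_cases hv : v ∈ S
  swap
  · refine ⟨fun _ => 0, ⟨0, 0, fun _ => by simp⟩, fun w hw => ?_⟩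
    rw [if_neg (by rintro rfl; exact hv hw)]
  obtain ⟨b, hb⟩ := hbas
  obtain ⟨i₀, hi₀⟩ := hb ⟨v, hv, rfl⟩
  refine ⟨dehomogenize (k • b.coord i₀), isIntAffine_dehomogenize _, fun w hw => ?_⟩
  obtain ⟨iw, hiw⟩ := hb ⟨w, hw, rfl⟩
  have hiff : iw = i₀ ↔ w = v := by
    refine ⟨fun h => (hrat w hw).eq_of_tilde_eq (hrat v hv) ?_, fun h => ?_⟩
    · rw [← hiw, ← hi₀, h]
    · subst h; exact b.injective (hiw.trans hi₀.symm)
  have hden : (den w : ℝ) ≠ 0 := by exact_mod_cast (hrat w hw).den_pos.ne'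
  rw [eq_comm, ← mul_right_inj' hden, (hrat w hw).den_mul_dehomogenize, ← hiw]
  simp only [LinearMap.smul_apply, Module.Basis.coord_apply, b.repr_self, Finsupp.single_apply,
    smul_eq_mul]
  by_cases h : w = v
  · subst h; simp [hiff, mul_div_cancel₀ _ hden]
  · simp [hiff, h]

end Dehomogenize

section Affine

variable {n : ℕ} {l l₁ l₂ : (Fin n → ℝ) → ℝ}

theorem IsIntAffine.isRealAffine (hl : IsIntAffine l) : IsRealAffine l :=
  let ⟨b, m, h⟩ := hl
  ⟨b, fun j => m j, h⟩

theorem IsRealAffine.continuous (hl : IsRealAffine l) : Continuous l := by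
  obtain ⟨b, m, h⟩ := hl
  rw [funext h]
  fun_prop

theorem IsRealAffine.map_add_smul (hl : IsRealAffine l) (x y : Fin n → ℝ) {a b : ℝ}
    (hab : a + b = 1) : l (a • x + b • y) = a * l x + b * l y := by
  obtain ⟨c, m, h⟩ := hl
  simp only [h, Pi.add_apply, Pi.smul_apply, smul_eq_mul, mul_add, Finset.sum_add_distrib,
    mul_left_comm (m _), ← Finset.mul_sum]
  linear_combination (-c) * hab

theorem IsRealAffine.eqOn_convexHull (h₁ : IsRealAffine l₁) (h₂ : IsRealAffine l₂)
    {A : Set (Fin n → ℝ)} (hA : Set.EqOn l₁ l₂ A) : Set.EqOn l₁ l₂ (convexHull ℝ A) := by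
  refine convexHull_min hA fun x hx y hy a b _ _ hab => ?_
  change l₁ _ = l₂ _
  rw [h₁.map_add_smul x y hab, h₂.map_add_smul x y hab, hx, hy]

theorem IsRealAffine.mapsTo_convexHull (hl : IsRealAffine l) {A : Set (Fin n → ℝ)}
    {s : Set ℝ} (hs : Convex ℝ s) (hA : Set.MapsTo l A s) : Set.MapsTo l (convexHull ℝ A) s :=
  convexHull_min hA fun x hx y hy a b ha hb hab => by
    change l _ ∈ s
    rw [hl.map_add_smul x y hab]
    exact hs hx hy ha hb hab

theorem isMcNaughton_of_finset {ι : Type*} (s : Finset ι) {L : ι → (Fin n → ℝ) → ℝ}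
    (hL : ∀ i ∈ s, IsIntAffine (L i)) {f : Cube n → ℝ} (hf : Continuous f)
    (hf01 : ∀ x, 0 ≤ f x ∧ f x ≤ 1) (hfL : ∀ x, ∃ i ∈ s, f x = L i x) : IsMcNaughton f := by
  refine ⟨hf, hf01, s.card, fun k => L (s.equivFin.symm k), fun k => hL _ (s.equivFin.symm k).2,
    fun x => ?_⟩
  obtain ⟨i, hi, hx⟩ := hfL x
  exact ⟨s.equivFin ⟨i, hi⟩, by simpa using hx⟩

end Affine

section Triangulation

variable {n : ℕ} {Δ : Finset (Finset (Fin n → ℝ))}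

theorem mem_vertexSet {v : Fin n → ℝ} : v ∈ vertexSet Δ ↔ ∃ S ∈ Δ, v ∈ S := by
  simp [vertexSet, Finset.mem_sup]

namespace IsTriangulation

theorem isRatPoint (hT : IsTriangulation Δ) {S : Finset (Fin n → ℝ)} (hS : S ∈ Δ)
    {w : Fin n → ℝ} (hw : w ∈ S) : IsRatPoint w :=
  ((hT.1 S hS).2.1 w hw).2

theorem exists_mem_convexHull (hT : IsTriangulation Δ) (x : Cube n) :
    ∃ S ∈ Δ, (x : Fin n → ℝ) ∈ convexHull ℝ (S : Set (Fin n → ℝ)) := by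
  have hx : (x : Fin n → ℝ) ∈ ⋃ S ∈ Δ, convexHull ℝ (S : Set (Fin n → ℝ)) := by
    rw [hT.2.1]
    exact x.2
  simpa using hx

/-- The singleton of a vertex is itself a simplex of `Δ`, so its intersection with `S` must be
a face of both. -/
theorem mem_of_mem_convexHull (hT : IsTriangulation Δ) {x : Fin n → ℝ} (hx : x ∈ vertexSet Δ)
    {S : Finset (Fin n → ℝ)} (hS : S ∈ Δ) (hxS : x ∈ convexHull ℝ (S : Set (Fin n → ℝ))) :
    x ∈ S := by
  let _ : DecidableEq (Fin n → ℝ) := Classical.decEq _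
  obtain ⟨T, hT', hxT⟩ := mem_vertexSet.1 hx
  have hsing : {x} ∈ Δ :=
    hT.2.2.1 T hT' {x} (Finset.singleton_subset_iff.2 hxT) (Finset.singleton_nonempty x)
  by_contra hxnS
  have hface := hT.2.2.2 {x} hsing S hS
  rw [Finset.singleton_inter_of_notMem hxnS, Finset.coe_empty, convexHull_empty,
    Finset.coe_singleton, convexHull_singleton] at hface
  exact (hface.subset ⟨rfl, hxS⟩ : x ∈ (∅ : Set (Fin n → ℝ)))

theorem eqOn_convexHull_inter (hT : IsTriangulation Δ)
    {L : Finset (Fin n → ℝ) → (Fin n → ℝ) → ℝ} (hL : ∀ S ∈ Δ, IsRealAffine (L S))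
    (hLw : ∀ S ∈ Δ, ∀ T ∈ Δ, ∀ w ∈ S, w ∈ T → L S w = L T w)
    {S T : Finset (Fin n → ℝ)} (hS : S ∈ Δ) (hT' : T ∈ Δ) :
    Set.EqOn (L S) (L T)
      (convexHull ℝ (S : Set (Fin n → ℝ)) ∩ convexHull ℝ (T : Set (Fin n → ℝ))) := by
  let _ : DecidableEq (Fin n → ℝ) := Classical.decEq _
  rw [hT.2.2.2 S hS T hT']
  refine (hL S hS).eqOn_convexHull (hL T hT') fun w hw => ?_
  rw [Finset.mem_coe, Finset.mem_inter] at hw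
  exact hLw S hS T hT' w hw.1 hw.2

theorem exists_continuous_eq_pieces (hT : IsTriangulation Δ)
    {L : Finset (Fin n → ℝ) → (Fin n → ℝ) → ℝ} (hL : ∀ S ∈ Δ, IsRealAffine (L S))
    (hLw : ∀ S ∈ Δ, ∀ T ∈ Δ, ∀ w ∈ S, w ∈ T → L S w = L T w) :
    ∃ f : Cube n → ℝ, Continuous f ∧ ∀ S ∈ Δ, ∀ x : Cube n,
      (x : Fin n → ℝ) ∈ convexHull ℝ (S : Set (Fin n → ℝ)) → f x = L S x := by
  choose σ hσΔ hσ using hT.exists_mem_convexHull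
  have hglue : ∀ S ∈ Δ, ∀ x : Cube n,
      (x : Fin n → ℝ) ∈ convexHull ℝ (S : Set (Fin n → ℝ)) → L (σ x) x = L S x :=
    fun S hS x hx => hT.eqOn_convexHull_inter hL hLw (hσΔ x) hS ⟨hσ x, hx⟩
  refine ⟨fun x => L (σ x) x, ?_, hglue⟩
  refine LocallyFinite.continuous (f := fun S : Δ =>
      Subtype.val ⁻¹' convexHull ℝ ((S : Finset (Fin n → ℝ)) : Set (Fin n → ℝ)))
    (locallyFinite_of_finite _) ?_ (fun S => ?_) (fun S => ?_)
  · exact Set.iUnion_eq_univ_iff.2 fun x => ⟨⟨σ x, hσΔ x⟩, hσ x⟩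
  · exact (S.1.finite_toSet.isClosed_convexHull ℝ).preimage continuous_subtype_val
  · exact ((hL S S.2).continuous.comp continuous_subtype_val).continuousOn.congr
      fun x hx => hglue S S.2 x hx

end IsTriangulation

end Triangulation

section Hats

theorem natCast_div_mem_Icc_of_dvd {a d : ℕ} (hd : 0 < d) (h : a ∣ d) :
    (a : ℝ) / d ∈ Set.Icc (0 : ℝ) 1 :=
  ⟨by positivity, div_le_one_of_le₀ (by exact_mod_cast Nat.le_of_dvd hd h) (by positivity)⟩

variable {n : ℕ} {Δ : Finset (Finset (Fin n → ℝ))} {a : (Fin n → ℝ) → ℕ}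

theorem IsRegularTriangulation.exists_isHat_isMcNaughton (hreg : IsRegularTriangulation Δ)
    {v : Fin n → ℝ} (hv : v ∈ vertexSet Δ) (had : a v ∣ den v) :
    ∃ f : Cube n → ℝ, IsHat Δ a v f ∧ IsMcNaughton f := by
  obtain ⟨hT, hbas⟩ := hreg
  set φ : (Fin n → ℝ) → ℝ := fun w => if w = v then (a v : ℝ) / den v else 0
  have hpiece : ∀ S ∈ Δ, ∃ l, IsIntAffine l ∧ ∀ w ∈ S, l w = φ w := fun S hS =>
    exists_isIntAffine_eq_ite_of_extendsToBasis (fun _ => hT.isRatPoint hS) (hbas S hS) v (a v)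
  choose! L hLint hLφ using hpiece
  have hLaff : ∀ S ∈ Δ, IsRealAffine (L S) := fun S hS => (hLint S hS).isRealAffine
  obtain ⟨f, hfc, hfL⟩ := hT.exists_continuous_eq_pieces hLaff
    fun S hS T hT' w hwS hwT => by rw [hLφ S hS w hwS, hLφ T hT' w hwT]
  have hφ01 : ∀ w, φ w ∈ Set.Icc (0 : ℝ) 1 := by
    obtain ⟨S, hS, hvS⟩ := mem_vertexSet.1 hv
    intro w
    by_cases hw : w = v
    · simpa only [φ, if_pos hw] using
        natCast_div_mem_Icc_of_dvd (hT.isRatPoint hS hvS).den_pos had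
    · simp [φ, hw]
  have hf01 : ∀ x, 0 ≤ f x ∧ f x ≤ 1 := fun x => by
    obtain ⟨S, hS, hx⟩ := hT.exists_mem_convexHull x
    rw [hfL S hS x hx]
    exact (hLaff S hS).mapsTo_convexHull (convex_Icc 0 1)
      (fun w hw => hLφ S hS w hw ▸ hφ01 w) hx
  have hfφ : ∀ x : Cube n, (x : Fin n → ℝ) ∈ vertexSet Δ → f x = φ x := fun x hx => by
    obtain ⟨S, hS, hxS⟩ := hT.exists_mem_convexHull x
    rw [hfL S hS x hxS, hLφ S hS x (hT.mem_of_mem_convexHull hx hS hxS)]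
  refine ⟨f, ⟨hf01, fun S hS => ⟨L S, hLaff S hS, hfL S hS⟩, fun x hx => ?_, fun x hx hxv => ?_⟩,
    isMcNaughton_of_finset Δ hLint hfc hf01 fun x => ?_⟩
  · exact (hfφ x (hx ▸ hv)).trans (if_pos hx)
  · exact (hfφ x hx).trans (if_neg hxv)
  · obtain ⟨S, hS, hx⟩ := hT.exists_mem_convexHull x
    exact ⟨S, hS, hfL S hS x hx⟩

end Hats

/-- A regular triangulation of `[0,1]^n` with weights `a_i ∣ den(v_i)`
is a weighted triangulation whose hats exist and form a basic set (each hat is a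
McNaughton function). -/
theorem regular_weighted_triangulation_basic (n : ℕ)
    (Δ : Finset (Finset (Fin n → ℝ))) (hreg : IsRegularTriangulation Δ)
    (a : (Fin n → ℝ) → ℕ) (ha : ∀ v ∈ vertexSet Δ, 0 < a v ∧ a v ∣ den v) :
    IsWeighted Δ a ∧
      ∃ h : (Fin n → ℝ) → Cube n → ℝ, IsHatFamily Δ a h ∧
        ∀ v ∈ vertexSet Δ, IsMcNaughton (h v) := by
  choose! h hhat hmcn using fun v (hv : v ∈ vertexSet Δ) =>
    hreg.exists_isHat_isMcNaughton hv (ha v hv).2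
  exact ⟨⟨hreg.1, ha⟩, h, hhat, hmcn⟩

end MVPaper
end

section
/- Suppose the weighted triangulation (Δ,(a_1,…,a_u)) of [0,1]^n, with vertices v_1,…,v_u, determines a basic set H_{Δ,a} = {h_1,…,h_u}, and let A be the subalgebra of M([0,1]^n) generated by H_{Δ,a}. Then: (1) A separates points of [0,1]^n; (2) setting m_i = den(v_i)/a_i (a positive integer), the pointwise real sum m_1·h_1 + … + m_u·h_u is the constant function 1 on [0,1]^n; and (3) for every subset C ⊆ {1,…,u} of cardinality k ≥ 1 such that the pointwise minimum of {h_i : i ∈ C} is not identically zero, the set {x ∈ [0,1]^n : h_j(x) = 0 for all j ∉ C} is homeomorphic to a (k−1)-dimensional simplex (equivalently, to the standard (k−1)-simplex). -/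
/-!
For `x` in a simplex `S` of `Δ`, each hat is affine on `S`, so `m_v h_v(x)` is the barycentric
coordinate of `x` at the vertex `v` of `S` (and `0` for `v ∉ S`), because `m_v · a_v / den v = 1`.
Hence `∑ m_v h_v = 1` and `x = ∑ m_v h_v(x) • v`, so already the hats separate points.
If at some `x` all hats of `C` are positive, then `C` is a face of the simplex containing `x`,
so `C ∈ Δ`; the common zeros of the remaining hats form exactly `conv C`, which the barycentric
coordinates identify with the standard simplex since `C` is affinely independent.
-/

section StdSimplex

variable {ι E : Type*} [Fintype ι] [AddCommGroup E] [Module ℝ E]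

theorem convexHull_range_eq_image_stdSimplex (p : ι → E) :
    convexHull ℝ (Set.range p) = (fun W => ∑ i, W i • p i) '' stdSimplex ℝ ι := by
  classical
  change _ = Fintype.linearCombination ℝ p '' _
  rw [← convexHull_basis_eq_stdSimplex, LinearMap.image_convexHull, ← Set.range_comp]
  congr 2
  ext i
  simp [Fintype.linearCombination_apply]

theorem AffineIndependent.injOn_stdSimplex {p : ι → E} (hp : AffineIndependent ℝ p) :
    Set.InjOn (fun W => ∑ i, W i • p i) (stdSimplex ℝ ι) := by
  intro W₁ hW₁ W₂ hW₂ hsum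
  refine (affineIndependent_iff_eq_of_fintype_affineCombination_eq ℝ p).mp hp
    W₁ W₂ hW₁.2 hW₂.2 ?_
  rwa [Finset.affineCombination_eq_linear_combination _ _ _ hW₁.2,
    Finset.affineCombination_eq_linear_combination _ _ _ hW₂.2]

variable [TopologicalSpace E] [IsTopologicalAddGroup E] [ContinuousSMul ℝ E] [T2Space E]

theorem AffineIndependent.nonempty_homeomorph_stdSimplex {p : ι → E}
    (hp : AffineIndependent ℝ p) :
    Nonempty (convexHull ℝ (Set.range p) ≃ₜ stdSimplex ℝ ι) := by
  have hbij : Set.BijOn (fun W => ∑ i, W i • p i) (stdSimplex ℝ ι)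
      (convexHull ℝ (Set.range p)) := by
    rw [convexHull_range_eq_image_stdSimplex]
    exact hp.injOn_stdSimplex.bijOn_image
  have : CompactSpace (stdSimplex ℝ ι) :=
    isCompact_iff_compactSpace.mp (isCompact_stdSimplex ℝ ι)
  have hcont : Continuous hbij.mapsTo.restrict :=
    (by fun_prop : Continuous fun W : ι → ℝ => ∑ i, W i • p i).restrict hbij.mapsTo
  exact ⟨(hcont.homeoOfEquivCompactToT2 (f := hbij.equiv _)).symm⟩

theorem Finset.nonempty_convexHull_homeomorph_stdSimplex {C : Finset E}
    (hC : AffineIndependent ℝ ((↑) : C → E)) :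
    Nonempty (convexHull ℝ (C : Set E) ≃ₜ stdSimplex ℝ (Fin C.card)) := by
  have hp : AffineIndependent ℝ (((↑) : C → E) ∘ C.equivFin.symm) :=
    hC.comp_embedding C.equivFin.symm.toEmbedding
  have hrange : Set.range (((↑) : C → E) ∘ C.equivFin.symm) = C := by
    rw [Set.range_comp, Equiv.range_eq_univ, Set.image_univ, Subtype.range_coe]
  obtain ⟨e⟩ := hp.nonempty_homeomorph_stdSimplex
  exact ⟨(Homeomorph.setCongr (congrArg (convexHull ℝ) hrange)).symm.trans e⟩

end StdSimplex

namespace MVPaper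

theorem IsRealAffine.map_sum_smul {n : ℕ} {l : (Fin n → ℝ) → ℝ} (hl : IsRealAffine l)
    {ι : Type*} (t : Finset ι) (w : ι → ℝ) (z : ι → Fin n → ℝ) (hw : ∑ i ∈ t, w i = 1) :
    l (∑ i ∈ t, w i • z i) = ∑ i ∈ t, w i * l (z i) := by
  obtain ⟨b, m, hm⟩ := hl
  simp only [hm, Finset.sum_apply, Pi.smul_apply, smul_eq_mul, mul_add, Finset.mul_sum,
    Finset.sum_add_distrib, ← Finset.sum_mul, hw, one_mul]
  rw [Finset.sum_comm]
  congr 1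
  refine Finset.sum_congr rfl fun j _ => Finset.sum_congr rfl fun i _ => ?_
  ring

theorem IsRatPoint.den_pos_s15 {n : ℕ} {v : Fin n → ℝ} (hv : IsRatPoint v) : 0 < den v := by
  choose q hq using hv
  have hmem :
      (∏ j, (q j).den) ∈ {d : ℕ | 0 < d ∧ ∀ i, ∃ c : ℤ, (d : ℝ) * v i = (c : ℝ)} := by
    refine ⟨Finset.prod_pos fun j _ => (q j).pos, fun i => ?_⟩
    refine ⟨(q i).num * ∏ j ∈ Finset.univ.erase i, ((q j).den : ℤ), ?_⟩
    rw [hq i, ← Finset.mul_prod_erase Finset.univ (fun j => (q j).den) (Finset.mem_univ i)]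
    push_cast
    rw [mul_comm, ← mul_assoc, ← Rat.cast_natCast, ← Rat.cast_mul, Rat.mul_den_eq_num,
      Rat.cast_intCast]
  exact (Nat.sInf_mem ⟨_, hmem⟩).1

theorem mem_vertexSet_iff {n : ℕ} {Δ : Finset (Finset (Fin n → ℝ))} {v : Fin n → ℝ} :
    v ∈ vertexSet Δ ↔ ∃ S ∈ Δ, v ∈ S := by
  classical
  simp [vertexSet, Finset.mem_sup]

theorem subset_mvGen {α : Type*} (S : Set (α → ℝ)) : S ⊆ mvGen S :=
  Set.subset_sInter fun _ hA => hA.2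

section Triangulation

variable {n : ℕ} {Δ : Finset (Finset (Fin n → ℝ))}

theorem subset_vertexSet {S : Finset (Fin n → ℝ)} (hS : S ∈ Δ) : S ⊆ vertexSet Δ :=
  fun _ hv => mem_vertexSet_iff.mpr ⟨S, hS, hv⟩

theorem IsTriangulation.mem_cube (hΔ : IsTriangulation Δ) {S : Finset (Fin n → ℝ)} (hS : S ∈ Δ)
    {v : Fin n → ℝ} (hv : v ∈ S) : v ∈ Cube n :=
  ((hΔ.1 S hS).2.1 v hv).1

theorem IsTriangulation.isRatPoint_s15 (hΔ : IsTriangulation Δ) {v : Fin n → ℝ}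
    (hv : v ∈ vertexSet Δ) : IsRatPoint v := by
  obtain ⟨S, hS, hvS⟩ := mem_vertexSet_iff.mp hv
  exact ((hΔ.1 S hS).2.1 v hvS).2

theorem IsTriangulation.convexHull_subset_cube (hΔ : IsTriangulation Δ)
    {S : Finset (Fin n → ℝ)} (hS : S ∈ Δ) : convexHull ℝ (S : Set (Fin n → ℝ)) ⊆ Cube n := by
  rw [← hΔ.2.1]
  exact fun y hy => Set.mem_iUnion₂.mpr ⟨S, hS, hy⟩

variable {a : (Fin n → ℝ) → ℕ} {h : (Fin n → ℝ) → Cube n → ℝ}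

theorem IsHat.apply_eq_of_sum_smul (hΔ : IsTriangulation Δ) {v : Fin n → ℝ} {f : Cube n → ℝ}
    (hf : IsHat Δ a v f) {S : Finset (Fin n → ℝ)} (hS : S ∈ Δ) {w : (Fin n → ℝ) → ℝ}
    (hw₀ : ∀ u ∈ S, 0 ≤ w u) (hw₁ : ∑ u ∈ S, w u = 1) (x : Cube n)
    (hx : ∑ u ∈ S, w u • u = x) :
    f x = if v ∈ S then w v * ((a v : ℝ) / den v) else 0 := by
  obtain ⟨-, haff, hval, hzero⟩ := hf
  obtain ⟨l, hl, hfl⟩ := haff S hS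
  have hvertex : ∀ u ∈ S, l u = if u = v then (a v : ℝ) / den v else 0 := by
    intro u hu
    have hcube := hΔ.mem_cube hS hu
    rw [← hfl ⟨u, hcube⟩ (subset_convexHull ℝ _ hu)]
    split_ifs with huv
    · exact hval ⟨u, hcube⟩ huv
    · exact hzero ⟨u, hcube⟩ (mem_vertexSet_iff.mpr ⟨S, hS, hu⟩) huv
  calc f x = l (∑ u ∈ S, w u • u) := by
        rw [hfl x (Finset.mem_convexHull'.mpr ⟨w, hw₀, hw₁, hx⟩), hx]
    _ = ∑ u ∈ S, w u * l u := hl.map_sum_smul S w id hw₁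
    _ = ∑ u ∈ S, if u = v then w u * ((a v : ℝ) / den v) else 0 :=
        Finset.sum_congr rfl fun u hu => by rw [hvertex u hu, mul_ite, mul_zero]
    _ = if v ∈ S then w v * ((a v : ℝ) / den v) else 0 := Finset.sum_ite_eq' S v _

theorem IsHatFamily.exists_simplex (hΔ : IsTriangulation Δ) (hfam : IsHatFamily Δ a h)
    (x : Cube n) :
    ∃ S ∈ Δ, ∃ w : (Fin n → ℝ) → ℝ, ∑ u ∈ S, w u = 1 ∧ ∑ u ∈ S, w u • u = x ∧
      ∀ v ∈ vertexSet Δ, h v x = if v ∈ S then w v * ((a v : ℝ) / den v) else 0 := by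
  have hx : (x : Fin n → ℝ) ∈ ⋃ S ∈ Δ, convexHull ℝ (S : Set (Fin n → ℝ)) := by
    rw [hΔ.2.1]; exact x.2
  obtain ⟨S, hS, hxS⟩ := Set.mem_iUnion₂.mp hx
  obtain ⟨w, hw₀, hw₁, hwx⟩ := Finset.mem_convexHull'.mp hxS
  exact ⟨S, hS, w, hw₁, hwx, fun v hv => (hfam v hv).apply_eq_of_sum_smul hΔ hS hw₀ hw₁ x hwx⟩

theorem IsWeighted.multiplier_mul_eq_one (hw : IsWeighted Δ a) {v : Fin n → ℝ}
    (hv : v ∈ vertexSet Δ) : ((den v / a v : ℕ) : ℝ) * ((a v : ℝ) / den v) = 1 := by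
  obtain ⟨ha, hdvd⟩ := hw.2 v hv
  have hden : (den v : ℝ) ≠ 0 := Nat.cast_ne_zero.mpr (hw.1.isRatPoint_s15 hv).den_pos_s15.ne'
  rw [Nat.cast_div hdvd (Nat.cast_ne_zero.mpr ha.ne')]
  field_simp

theorem IsHatFamily.mem_of_inf'_ne_zero (hΔ : IsTriangulation Δ) (hfam : IsHatFamily Δ a h)
    {C : Finset (Fin n → ℝ)} (hCV : C ⊆ vertexSet Δ) (hC : C.Nonempty) {x : Cube n}
    (hx : C.inf' hC (fun v => h v x) ≠ 0) : C ∈ Δ := by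
  obtain ⟨S, hS, w, -, -, hhat⟩ := hfam.exists_simplex hΔ x
  refine hΔ.2.2.1 S hS C (fun v hv => ?_) hC
  by_contra hvS
  have hle : C.inf' hC (fun v => h v x) ≤ 0 :=
    (Finset.inf'_le _ hv).trans_eq (by rw [hhat v (hCV hv), if_neg hvS])
  exact hx (hle.antisymm (Finset.le_inf' _ _ fun u hu => ((hfam u (hCV hu)).1 x).1))

noncomputable def baryCoord (a : (Fin n → ℝ) → ℕ) (h : (Fin n → ℝ) → Cube n → ℝ) (x : Cube n)
    (v : Fin n → ℝ) : ℝ :=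
  ((den v / a v : ℕ) : ℝ) * h v x

theorem IsHatFamily.baryCoord_nonneg (hfam : IsHatFamily Δ a h) (x : Cube n) {v : Fin n → ℝ}
    (hv : v ∈ vertexSet Δ) : 0 ≤ baryCoord a h x v :=
  mul_nonneg (Nat.cast_nonneg _) ((hfam v hv).1 x).1

theorem IsHatFamily.exists_simplex_baryCoord (hw : IsWeighted Δ a) (hfam : IsHatFamily Δ a h)
    (x : Cube n) :
    ∃ S ∈ Δ, ∃ w : (Fin n → ℝ) → ℝ, ∑ u ∈ S, w u = 1 ∧ ∑ u ∈ S, w u • u = x ∧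
      ∀ v ∈ vertexSet Δ, baryCoord a h x v = if v ∈ S then w v else 0 := by
  obtain ⟨S, hS, w, hw₁, hwx, hhat⟩ := hfam.exists_simplex hw.1 x
  refine ⟨S, hS, w, hw₁, hwx, fun v hv => ?_⟩
  rw [baryCoord, hhat v hv, mul_ite, mul_zero, mul_left_comm, hw.multiplier_mul_eq_one hv,
    mul_one]

theorem IsHatFamily.sum_baryCoord (hw : IsWeighted Δ a) (hfam : IsHatFamily Δ a h)
    (x : Cube n) : ∑ v ∈ vertexSet Δ, baryCoord a h x v = 1 := by
  obtain ⟨S, hS, w, hw₁, -, hbary⟩ := hfam.exists_simplex_baryCoord hw x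
  rw [Finset.sum_congr rfl hbary, Finset.sum_ite_mem,
    Finset.inter_eq_right.mpr (subset_vertexSet hS), hw₁]

theorem IsHatFamily.sum_baryCoord_smul (hw : IsWeighted Δ a) (hfam : IsHatFamily Δ a h)
    (x : Cube n) : ∑ v ∈ vertexSet Δ, baryCoord a h x v • v = x := by
  obtain ⟨S, hS, w, -, hwx, hbary⟩ := hfam.exists_simplex_baryCoord hw x
  rw [Finset.sum_congr rfl fun v hv => by rw [hbary v hv, ite_smul, zero_smul],
    Finset.sum_ite_mem, Finset.inter_eq_right.mpr (subset_vertexSet hS), hwx]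

theorem IsHatFamily.separates_mvGen_hatSet (hw : IsWeighted Δ a) (hfam : IsHatFamily Δ a h) :
    Separates (mvGen (hatSet Δ h)) := by
  intro x y hxy
  by_contra! hagree
  refine hxy (Subtype.ext ?_)
  rw [← hfam.sum_baryCoord_smul hw x, ← hfam.sum_baryCoord_smul hw y]
  refine Finset.sum_congr rfl fun v hv => ?_
  rw [baryCoord, baryCoord, hagree (h v) (subset_mvGen _ ⟨v, hv, rfl⟩)]

theorem IsHatFamily.forall_hat_eq_zero_iff_mem_convexHull (hw : IsWeighted Δ a)
    (hfam : IsHatFamily Δ a h) {C : Finset (Fin n → ℝ)} (hC : C ∈ Δ) (x : Cube n) :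
    (∀ v ∈ vertexSet Δ, v ∉ C → h v x = 0) ↔ (x : Fin n → ℝ) ∈ convexHull ℝ (C : Set _) := by
  constructor
  · intro hx
    have hzero : ∀ v ∈ vertexSet Δ, v ∉ C → baryCoord a h x v = 0 := fun v hv hvC => by
      rw [baryCoord, hx v hv hvC, mul_zero]
    refine Finset.mem_convexHull'.mpr ⟨baryCoord a h x,
      fun v hv => hfam.baryCoord_nonneg x (subset_vertexSet hC hv), ?_, ?_⟩
    · rw [Finset.sum_subset (subset_vertexSet hC) hzero, hfam.sum_baryCoord hw]
    · rw [Finset.sum_subset (subset_vertexSet hC) fun v hv hvC => by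
        rw [hzero v hv hvC, zero_smul], hfam.sum_baryCoord_smul hw]
  · intro hxC v hv hvC
    obtain ⟨w, hw₀, hw₁, hwx⟩ := Finset.mem_convexHull'.mp hxC
    rw [(hfam v hv).apply_eq_of_sum_smul hw.1 hC hw₀ hw₁ x hwx, if_neg hvC]

theorem IsHatFamily.image_val_commonZeros_eq_convexHull (hw : IsWeighted Δ a)
    (hfam : IsHatFamily Δ a h) {C : Finset (Fin n → ℝ)} (hC : C ∈ Δ) :
    Subtype.val '' {x : Cube n | ∀ v ∈ vertexSet Δ, v ∉ C → h v x = 0} =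
      convexHull ℝ (C : Set _) := by
  ext y
  constructor
  · rintro ⟨x, hx, rfl⟩
    exact (hfam.forall_hat_eq_zero_iff_mem_convexHull hw hC x).mp hx
  · intro hy
    let x : Cube n := ⟨y, hw.1.convexHull_subset_cube hC hy⟩
    exact ⟨x, (hfam.forall_hat_eq_zero_iff_mem_convexHull hw hC x).mpr hy, rfl⟩

end Triangulation

theorem basic_set_is_basis_general (n : ℕ) (Δ : Finset (Finset (Fin n → ℝ)))
    (a : (Fin n → ℝ) → ℕ) (h : (Fin n → ℝ) → Cube n → ℝ)
    (hw : IsWeighted Δ a) (hfam : IsHatFamily Δ a h) :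
    Separates (mvGen (hatSet Δ h)) ∧
    (∀ x : Cube n, ∑ v ∈ vertexSet Δ, ((den v / a v : ℕ) : ℝ) * h v x = 1) ∧
    ∀ C : Finset (Fin n → ℝ), C ⊆ vertexSet Δ → ∀ hC : C.Nonempty,
      (∃ x : Cube n, C.inf' hC (fun v => h v x) ≠ 0) →
      Nonempty ({x : Cube n | ∀ v ∈ vertexSet Δ, v ∉ C → h v x = 0} ≃ₜ
        stdSimplex ℝ (Fin C.card)) := by
  refine ⟨hfam.separates_mvGen_hatSet hw, hfam.sum_baryCoord hw, ?_⟩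
  rintro C hCV hC ⟨x, hx⟩
  have hCΔ : C ∈ Δ := hfam.mem_of_inf'_ne_zero hw.1 hCV hC hx
  obtain ⟨e⟩ := Finset.nonempty_convexHull_homeomorph_stdSimplex (hw.1.1 C hCΔ).2.2
  exact ⟨((Topology.IsEmbedding.subtypeVal.homeomorphImage _).trans
    (Homeomorph.setCongr (hfam.image_val_commonZeros_eq_convexHull hw hCΔ))).trans e⟩

/-- A basic set of hats of a weighted triangulation is a basis of the
subalgebra it generates: the generated algebra separates points, the hats with the
multipliers `m_i = den(v_i)/a_i` sum to `1`, and the common-zero loci condition. -/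
theorem basic_set_is_basis (n : ℕ) (Δ : Finset (Finset (Fin n → ℝ)))
    (a : (Fin n → ℝ) → ℕ) (h : (Fin n → ℝ) → Cube n → ℝ)
    (hw : IsWeighted Δ a) (hfam : IsHatFamily Δ a h)
    (hbasic : ∀ v ∈ vertexSet Δ, IsMcNaughton (h v)) :
    Separates (mvGen (hatSet Δ h)) ∧
    (∀ x : Cube n, ∑ v ∈ vertexSet Δ, ((den v / a v : ℕ) : ℝ) * h v x = 1) ∧
    ∀ C : Finset (Fin n → ℝ), C ⊆ vertexSet Δ → ∀ hC : C.Nonempty,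
      (∃ x : Cube n, C.inf' hC (fun v => h v x) ≠ 0) →
      Nonempty ({x : Cube n | ∀ v ∈ vertexSet Δ, v ∉ C → h v x = 0} ≃ₜ
        stdSimplex ℝ (Fin C.card)) :=
  basic_set_is_basis_general n Δ a h hw hfam

end MVPaper
end
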